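/- Let α > 1 and d(i,j) = max(|i-j|,1), u = 2^α ∑_m d(0,m)^{-α}. For any fixed integers n ≥ 1 and any constant c > 0, the quadruple sum ∑_{k≥n, ℓ<n} ∑_{k'≥0, ℓ'<0} ∑_{{a,b}={k,ℓ}, {a',b'}={k',ℓ'}} d(a,b)^{-α} d(a',b)^{-α} d(a,a')^{-α} is at most u² ∑_{k≥n, ℓ'<0} d(k,ℓ')^{-2α}, hence at most C n^{2-2α}. -/

import Mathlib

/-!
For `α > 0` and `c ≤ a + b` one of `a, b` is at least `c / 2`, so
`a^{-α} b^{-α} ≤ 2^α c^{-α} (a^{-α} + b^{-α})`; summing over the middle point gives the convolution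
inequality `∑_m d(x,m)^{-α} d(m,y)^{-α} ≤ 2u d(x,y)^{-α}`. In each of the four orientations of the
triangle the constraint `b = b'` eliminates one index (the orientation `b = k ≥ n`, `b' = ℓ' < 0`
never occurs), and the convolution inequality applied to the remaining middle index closes the
triangle to the loop `d(k,ℓ')^{-2α}`; the three orientations cost `6u ≤ u²`. Finally
`d(k,ℓ')² ≥ (k+1)(n-ℓ')` for `k ≥ n`, `ℓ' < 0`, so the corner sum is at most the square of
`∑_{i ≥ 0} (n+1+i)^{-α} ≤ ∫_n^∞ t^{-α} dt = n^{1-α}/(α-1)`.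
-/

noncomputable def dZ (i j : ℤ) : ℝ := max |(i : ℝ) - (j : ℝ)| 1

open scoped ENNReal

lemma tsum_le_of_tsum_ofReal_le {ι : Type*} {f : ι → ℝ} (hf : ∀ i, 0 ≤ f i) {B : ℝ} (hB : 0 ≤ B)
    (h : ∑' i, ENNReal.ofReal (f i) ≤ ENNReal.ofReal B) : ∑' i, f i ≤ B := by
  calc ∑' i, f i = (∑' i, ENNReal.ofReal (f i)).toReal := by
        rw [ENNReal.tsum_toReal_eq fun _ => ENNReal.ofReal_ne_top]
        simp only [ENNReal.toReal_ofReal (hf _)]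
    _ ≤ B := ENNReal.toReal_le_of_le_ofReal hB h

lemma tsum_le_of_eq_zero_off_fiber {r : ℕ → ℤ} (hr : r.Injective) {z : ℤ} {f : ℕ → ℝ≥0∞}
    {G : ℝ≥0∞} (h0 : ∀ c, r c ≠ z → f c = 0) (h : ∀ c, r c = z → f c ≤ G) : ∑' c, f c ≤ G := by
  by_cases hz : ∃ c, r c = z
  · obtain ⟨c, rfl⟩ := hz
    rw [tsum_eq_single c fun c' hc' => h0 c' (hr.ne hc')]
    exact h c rfl
  · push Not at hz
    simp [h0 _ (hz _)]

lemma injective_sub_natCast (z : ℤ) : (fun j : ℕ => z - j).Injective :=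
  fun _ _ h => by simpa using h

lemma rpow_neg_mul_rpow_neg_le {a b c α : ℝ} (ha : 0 < a) (hb : 0 < b) (hc : 0 < c)
    (habc : c ≤ a + b) (hα : 0 ≤ α) :
    a ^ (-α) * b ^ (-α) ≤ 2 ^ α * c ^ (-α) * (a ^ (-α) + b ^ (-α)) := by
  wlog hab : a ≤ b generalizing a b
  · rw [mul_comm, add_comm]
    exact this hb ha (by linarith) (by linarith)
  have hb_big : b ^ (-α) ≤ 2 ^ α * c ^ (-α) := by
    calc b ^ (-α) ≤ (c / 2) ^ (-α) :=
          Real.rpow_le_rpow_of_nonpos (by positivity) (by linarith) (by linarith)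
      _ = 2 ^ α * c ^ (-α) := by
          rw [Real.div_rpow hc.le zero_le_two, Real.rpow_neg zero_le_two, div_inv_eq_mul, mul_comm]
  have := Real.rpow_nonneg ha.le (-α)
  have := Real.rpow_nonneg hb.le (-α)
  calc a ^ (-α) * b ^ (-α) ≤ a ^ (-α) * (2 ^ α * c ^ (-α)) := by gcongr
    _ ≤ 2 ^ α * c ^ (-α) * (a ^ (-α) + b ^ (-α)) := by
      nlinarith [mul_nonneg (Real.rpow_nonneg zero_le_two α) (Real.rpow_nonneg hc.le (-α))]

lemma one_le_dZ (i j : ℤ) : 1 ≤ dZ i j := le_max_right _ _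

lemma dZ_pos (i j : ℤ) : 0 < dZ i j := one_pos.trans_le (one_le_dZ i j)

lemma dZ_rpow_nonneg (α : ℝ) (i j : ℤ) : 0 ≤ dZ i j ^ α := Real.rpow_nonneg (dZ_pos i j).le α

lemma dZ_comm (i j : ℤ) : dZ i j = dZ j i := by
  rw [dZ, dZ, abs_sub_comm]

lemma dZ_eq_dZ_zero_sub (i j : ℤ) : dZ i j = dZ 0 (j - i) := by
  simp only [dZ]; push_cast; rw [zero_sub, abs_neg, abs_sub_comm]

lemma dZ_zero_neg (m : ℤ) : dZ 0 (-m) = dZ 0 m := by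
  simp [dZ]

lemma dZ_le_add (i j m : ℤ) : dZ i j ≤ dZ i m + dZ m j :=
  max_le ((abs_sub_le _ _ _).trans (add_le_add (le_max_left _ _) (le_max_left _ _)))
    (by linarith [one_le_dZ i m, one_le_dZ m j])

lemma dZ_of_lt {i j : ℤ} (h : j < i) : dZ i j = i - j := by
  have h1 : (1 : ℝ) ≤ i - j := by exact_mod_cast (by omega : (1 : ℤ) ≤ i - j)
  rw [dZ, abs_of_nonneg (by linarith), max_eq_left h1]

lemma summable_dZ_zero_rpow_neg {α : ℝ} (hα : 1 < α) :
    Summable fun m : ℤ => dZ 0 m ^ (-α) := by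
  have hnat : Summable fun i : ℕ => dZ 0 i ^ (-α) := by
    refine (summable_nat_add_iff 1).mp ?_
    have hp : Summable fun i : ℕ => ((i + 1 : ℕ) : ℝ) ^ (-α) :=
      (summable_nat_add_iff 1).mpr (Real.summable_nat_rpow.mpr (by linarith))
    refine hp.congr fun i => ?_
    rw [dZ_comm, dZ_of_lt (by omega)]
    push_cast; ring_nf
  exact .of_nat_of_neg hnat (by simpa only [dZ_zero_neg] using hnat)

noncomputable def convConst (α : ℝ) : ℝ := 2 ^ α * ∑' m : ℤ, dZ 0 m ^ (-α)

lemma six_le_convConst {α : ℝ} (hα : 1 < α) : 6 ≤ convConst α := by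
  have hT : (3 : ℝ) ≤ ∑' m : ℤ, dZ 0 m ^ (-α) := by
    have h := (summable_dZ_zero_rpow_neg hα).sum_le_tsum {-1, 0, 1}
      fun m _ => dZ_rpow_nonneg _ 0 m
    norm_num [dZ] at h ⊢
    exact h
  have h2 : (2 : ℝ) < 2 ^ α := by
    simpa using Real.rpow_lt_rpow_of_exponent_lt one_lt_two hα
  unfold convConst
  nlinarith

/-- Valued in `ℝ≥0∞`, so that the nonnegative multiple series below can be reordered and compared
without summability side conditions. -/
noncomputable def powDecay (α : ℝ) (x y : ℤ) : ℝ≥0∞ := ENNReal.ofReal (dZ x y ^ (-α))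

lemma powDecay_comm (α : ℝ) (x y : ℤ) : powDecay α x y = powDecay α y x := by
  unfold powDecay; rw [dZ_comm]

lemma powDecay_mul_self (α : ℝ) (x y : ℤ) :
    powDecay α x y * powDecay α x y = powDecay (2 * α) x y := by
  rw [powDecay, powDecay, ← ENNReal.ofReal_mul (dZ_rpow_nonneg _ x y),
    ← Real.rpow_add (dZ_pos x y)]
  ring_nf

lemma ofReal_dZ_rpow_mul (α : ℝ) (a b c d e f : ℤ) :
    ENNReal.ofReal (dZ a b ^ (-α) * dZ c d ^ (-α) * dZ e f ^ (-α)) =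
      powDecay α a b * powDecay α c d * powDecay α e f := by
  rw [ENNReal.ofReal_mul (mul_nonneg (dZ_rpow_nonneg _ _ _) (dZ_rpow_nonneg _ _ _)),
    ENNReal.ofReal_mul (dZ_rpow_nonneg _ _ _), powDecay, powDecay, powDecay]

lemma tsum_powDecay_left {α : ℝ} (hα : 1 < α) (x : ℤ) :
    ∑' m, powDecay α x m = ENNReal.ofReal (∑' m : ℤ, dZ 0 m ^ (-α)) := by
  rw [ENNReal.ofReal_tsum_of_nonneg (dZ_rpow_nonneg _ 0) (summable_dZ_zero_rpow_neg hα)]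
  simp only [powDecay, dZ_eq_dZ_zero_sub x]
  exact (Equiv.subRight x).tsum_eq fun m => ENNReal.ofReal (dZ 0 m ^ (-α))

lemma tsum_powDecay_mul_le {α : ℝ} (hα : 1 < α) (x y : ℤ) :
    ∑' m, powDecay α x m * powDecay α m y ≤ ENNReal.ofReal (2 * convConst α) * powDecay α x y := by
  set c := ENNReal.ofReal (2 ^ α * dZ x y ^ (-α))
  have h2 : (0 : ℝ) ≤ 2 ^ α := by positivity
  have hpoint : ∀ m, powDecay α x m * powDecay α m y ≤ c * (powDecay α x m + powDecay α y m) := by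
    intro m
    have h := rpow_neg_mul_rpow_neg_le (dZ_pos x m) (dZ_pos m y) (dZ_pos x y) (dZ_le_add x y m)
      (by linarith : 0 ≤ α)
    simp only [powDecay, c, dZ_comm y m]
    rw [← ENNReal.ofReal_mul (dZ_rpow_nonneg _ _ _),
      ← ENNReal.ofReal_add (dZ_rpow_nonneg _ _ _) (dZ_rpow_nonneg _ _ _),
      ← ENNReal.ofReal_mul (mul_nonneg h2 (dZ_rpow_nonneg _ _ _))]
    exact ENNReal.ofReal_le_ofReal h
  calc ∑' m, powDecay α x m * powDecay α m y
      ≤ ∑' m, c * (powDecay α x m + powDecay α y m) := ENNReal.tsum_le_tsum hpoint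
    _ = c * (2 * ENNReal.ofReal (∑' m : ℤ, dZ 0 m ^ (-α))) := by
      rw [ENNReal.tsum_mul_left, ENNReal.tsum_add, tsum_powDecay_left hα, tsum_powDecay_left hα,
        two_mul]
    _ = ENNReal.ofReal (2 * convConst α) * powDecay α x y := by
      have hT : 0 ≤ ∑' m : ℤ, dZ 0 m ^ (-α) := tsum_nonneg (dZ_rpow_nonneg _ 0)
      rw [← ENNReal.ofReal_ofNat 2, ← ENNReal.ofReal_mul zero_le_two,
        ← ENNReal.ofReal_mul (mul_nonneg h2 (dZ_rpow_nonneg _ _ _)), powDecay,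
        ← ENNReal.ofReal_mul (by unfold convConst; positivity)]
      congr 1
      unfold convConst
      ring

lemma tsum_powDecay_triangle_le {α : ℝ} (hα : 1 < α) {e : ℕ → ℤ} (he : e.Injective) (x y : ℤ) :
    ∑' v, powDecay α x (e v) * powDecay α (e v) y * powDecay α x y ≤
      ENNReal.ofReal (2 * convConst α) * powDecay (2 * α) x y := by
  calc ∑' v, powDecay α x (e v) * powDecay α (e v) y * powDecay α x y
      ≤ (∑' m, powDecay α x m * powDecay α m y) * powDecay α x y := by
        rw [ENNReal.tsum_mul_right]
        gcongr
        exact ENNReal.tsum_comp_le_tsum_of_injective he _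
    _ ≤ ENNReal.ofReal (2 * convConst α) * powDecay α x y * powDecay α x y := by
        gcongr; exact tsum_powDecay_mul_le hα x y
    _ = ENNReal.ofReal (2 * convConst α) * powDecay (2 * α) x y := by
        rw [mul_assoc, powDecay_mul_self]

lemma summable_natCast_add_rpow_neg {α : ℝ} (hα : 1 < α) (N : ℕ) :
    Summable fun i : ℕ => ((i + N + 1 : ℕ) : ℝ) ^ (-α) :=
  (summable_nat_add_iff (N + 1)).mpr (Real.summable_nat_rpow.mpr (by linarith))

lemma tsum_natCast_add_rpow_neg_le {α : ℝ} (hα : 1 < α) {N : ℕ} (hN : 0 < N) :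
    ∑' i : ℕ, ((i + N + 1 : ℕ) : ℝ) ^ (-α) ≤ (N : ℝ) ^ (1 - α) / (α - 1) := by
  have hN' : (0 : ℝ) < N := by exact_mod_cast hN
  have hanti : AntitoneOn (fun t : ℝ => t ^ (-α)) (Set.Ici (N : ℝ)) := fun s hs t _ hst =>
    Real.rpow_le_rpow_of_nonpos (hN'.trans_le hs) hst (by linarith)
  calc ∑' i : ℕ, ((i + N + 1 : ℕ) : ℝ) ^ (-α)
      ≤ ∫ t in Set.Ioi (N : ℝ), t ^ (-α) :=
        hanti.tsum_comp_add_le_integral N (integrableOn_Ioi_rpow_of_lt (by linarith) hN')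
          fun t ht => Real.rpow_nonneg (hN'.trans ht).le _
    _ = (N : ℝ) ^ (1 - α) / (α - 1) := by
        rw [integral_Ioi_rpow_of_lt (by linarith) hN', neg_div, ← div_neg]
        ring_nf

lemma dZ_rpow_corner_le {α : ℝ} (hα : 0 ≤ α) (N i j : ℕ) :
    dZ (N + i) (-1 - j) ^ (-(2 * α)) ≤
      ((i + N + 1 : ℕ) : ℝ) ^ (-α) * ((j + N + 1 : ℕ) : ℝ) ^ (-α) := by
  rw [dZ_of_lt (by omega), ← Real.mul_rpow (by positivity) (by positivity)]
  push_cast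
  have hc : (0 : ℝ) ≤ N + i - (-1 - j) :=
    (by positivity : (0 : ℝ) ≤ N + i + 1 + j).trans_eq (by ring)
  rw [show -(2 * α) = 2 * -α by ring, Real.rpow_mul hc, Real.rpow_two]
  exact Real.rpow_le_rpow_of_nonpos (by positivity) (by nlinarith) (by linarith)

lemma summable_dZ_rpow_corner {α : ℝ} (hα : 1 < α) (N : ℕ) :
    Summable fun p : ℕ × ℕ => dZ (N + p.1) (-1 - p.2) ^ (-(2 * α)) :=
  .of_nonneg_of_le (fun _ => dZ_rpow_nonneg _ _ _) (fun p => dZ_rpow_corner_le (by linarith) N _ _)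
    ((summable_natCast_add_rpow_neg hα N).mul_of_nonneg (summable_natCast_add_rpow_neg hα N)
      (fun _ => by positivity) (fun _ => by positivity))

lemma tsum_dZ_rpow_corner_le {α : ℝ} (hα : 1 < α) {N : ℕ} (hN : 0 < N) :
    ∑' p : ℕ × ℕ, dZ (N + p.1) (-1 - p.2) ^ (-(2 * α)) ≤
      (N : ℝ) ^ (2 - 2 * α) / (α - 1) ^ 2 := by
  have hg := summable_natCast_add_rpow_neg hα N
  have hg0 : 0 ≤ ∑' i : ℕ, ((i + N + 1 : ℕ) : ℝ) ^ (-α) := tsum_nonneg fun _ => by positivity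
  calc ∑' p : ℕ × ℕ, dZ (N + p.1) (-1 - p.2) ^ (-(2 * α))
      ≤ ∑' p : ℕ × ℕ, ((p.1 + N + 1 : ℕ) : ℝ) ^ (-α) * ((p.2 + N + 1 : ℕ) : ℝ) ^ (-α) :=
        (summable_dZ_rpow_corner hα N).tsum_le_tsum (fun p => dZ_rpow_corner_le (by linarith) N _ _)
          (hg.mul_of_nonneg hg (fun _ => by positivity) (fun _ => by positivity))
    _ = (∑' i : ℕ, ((i + N + 1 : ℕ) : ℝ) ^ (-α)) ^ 2 := by
        rw [sq, hg.tsum_mul_tsum hg (hg.mul_of_nonneg hg (fun _ => by positivity)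
          (fun _ => by positivity))]
    _ ≤ ((N : ℝ) ^ (1 - α) / (α - 1)) ^ 2 := by gcongr; exact tsum_natCast_add_rpow_neg_le hα hN
    _ = (N : ℝ) ^ (2 - 2 * α) / (α - 1) ^ 2 := by
        rw [div_pow, ← Real.rpow_natCast, ← Real.rpow_mul (Nat.cast_nonneg N)]
        norm_num; ring_nf

noncomputable def triangleSummand (α : ℝ) (n : ℤ) (q : (ℕ × ℕ) × (ℕ × ℕ) × Bool × Bool) : ℝ :=
  let k : ℤ := n + q.1.1
  let l : ℤ := n - 1 - q.1.2
  let k' : ℤ := q.2.1.1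
  let l' : ℤ := -1 - q.2.1.2
  let a : ℤ := if q.2.2.1 then k else l
  let b : ℤ := if q.2.2.1 then l else k
  let a' : ℤ := if q.2.2.2 then k' else l'
  let b' : ℤ := if q.2.2.2 then l' else k'
  if b = b' then dZ a b ^ (-α) * dZ a' b ^ (-α) * dZ a a' ^ (-α) else 0

lemma triangleSummand_nonneg (α : ℝ) (n : ℤ) (q : (ℕ × ℕ) × (ℕ × ℕ) × Bool × Bool) :
    0 ≤ triangleSummand α n q := by
  unfold triangleSummand
  exact ite_nonneg (mul_nonneg (mul_nonneg (dZ_rpow_nonneg _ _ _) (dZ_rpow_nonneg _ _ _))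
    (dZ_rpow_nonneg _ _ _)) le_rfl

section Corner

variable {α : ℝ} (N : ℕ)

lemma tsum_corner_triangle_le (hα : 1 < α) {e : ℕ → ℤ} (he : e.Injective) :
    ∑' (i : ℕ) (j' : ℕ) (v : ℕ), powDecay α (N + i) (e v) * powDecay α (e v) (-1 - j') *
        powDecay α (N + i) (-1 - j') ≤
      ENNReal.ofReal (2 * convConst α) *
        ∑' (i : ℕ) (j' : ℕ), powDecay (2 * α) (N + i) (-1 - j') := by
  simp only [← ENNReal.tsum_mul_left]
  gcongr with i j'
  exact tsum_powDecay_triangle_le hα he _ _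

lemma tsum_ite_natCast_eq_le (hα : 1 < α) (z : ℕ → ℕ → ℤ) (T : ℕ → ℕ → ℕ → ℝ≥0∞)
    (hT : ∀ i j j', T i j j' = powDecay α (N + i) (N - 1 - j) * powDecay α (N - 1 - j) (-1 - j') *
      powDecay α (N + i) (-1 - j')) :
    ∑' (i : ℕ) (j : ℕ) (i' : ℕ) (j' : ℕ), (if z i j = (i' : ℤ) then T i j j' else 0) ≤
      ENNReal.ofReal (2 * convConst α) *
        ∑' (i : ℕ) (j' : ℕ), powDecay (2 * α) (N + i) (-1 - j') := by
  refine le_trans ?_ (tsum_corner_triangle_le N hα (injective_sub_natCast (N - 1)))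
  calc _ ≤ ∑' (i : ℕ) (j : ℕ) (j' : ℕ), T i j j' := by
        refine ENNReal.tsum_le_tsum fun i => ENNReal.tsum_le_tsum fun j => ?_
        refine tsum_le_of_eq_zero_off_fiber Nat.cast_injective (z := z i j)
          (fun c hc => by simp [Ne.symm hc]) (fun c hc => by simp [hc])
    _ = _ := by
        simp only [hT]
        exact tsum_congr fun i => ENNReal.tsum_comm

lemma tsum_ite_eq_neg_sub_le (hα : 1 < α) :
    ∑' (i : ℕ) (j : ℕ) (i' : ℕ) (j' : ℕ),
        (if (N : ℤ) - 1 - j = -1 - j' then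
          powDecay α (N + i) (N - 1 - j) * powDecay α i' (N - 1 - j) * powDecay α (N + i) i'
        else 0) ≤
      ENNReal.ofReal (2 * convConst α) *
        ∑' (i : ℕ) (j' : ℕ), powDecay (2 * α) (N + i) (-1 - j') := by
  refine (tsum_congr fun i => ENNReal.tsum_comm).trans_le ?_
  refine (tsum_congr fun i => tsum_congr fun i' => ENNReal.tsum_comm).trans_le ?_
  refine le_trans ?_ (tsum_corner_triangle_le N hα Nat.cast_injective)
  calc _ ≤ ∑' (i : ℕ) (i' : ℕ) (j' : ℕ), powDecay α (N + i) i' * powDecay α i' (-1 - j') *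
        powDecay α (N + i) (-1 - j') := by
        refine ENNReal.tsum_le_tsum fun i => ENNReal.tsum_le_tsum fun i' =>
          ENNReal.tsum_le_tsum fun j' => ?_
        refine tsum_le_of_eq_zero_off_fiber (injective_sub_natCast (N - 1)) (z := -1 - j')
          (fun c hc => if_neg hc) (fun c hc => ?_)
        rw [if_pos hc, hc, powDecay_comm α i']
        exact le_of_eq (by ring)
    _ = _ := tsum_congr fun i => ENNReal.tsum_comm

end Corner

lemma tsum_ofReal_triangleSummand_le {α : ℝ} (hα : 1 < α) (N : ℕ) :
    ∑' q, ENNReal.ofReal (triangleSummand α N q) ≤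
      ENNReal.ofReal (6 * convConst α) *
        ∑' (i : ℕ) (j' : ℕ), powDecay (2 * α) (N + i) (-1 - j') := by
  have hk_ne_l' : ∀ i j' : ℕ, (N : ℤ) + i ≠ -1 - j' := fun _ _ => by omega
  simp only [triangleSummand, ENNReal.tsum_prod', tsum_bool, apply_ite ENNReal.ofReal,
    ENNReal.ofReal_zero, ofReal_dZ_rpow_mul, ite_true, ite_false, Bool.false_eq_true,
    ENNReal.tsum_add, hk_ne_l', add_zero]
  have hu : 0 ≤ 2 * convConst α := by linarith [six_le_convConst hα]
  rw [show 6 * convConst α = 2 * convConst α + 2 * convConst α + 2 * convConst α by ring,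
    ENNReal.ofReal_add (by linarith) hu, ENNReal.ofReal_add hu hu, add_mul, add_mul, add_assoc]
  gcongr
  · exact tsum_ite_natCast_eq_le N hα (fun i _ => N + i) _ fun i j j' => by
      rw [powDecay_comm α _ (N + i), powDecay_comm α _ (N + i)]; ring
  · exact tsum_ite_natCast_eq_le N hα (fun _ j => N - 1 - j) _ fun i j j' => by
      rw [powDecay_comm α (-1 - j')]
  · exact tsum_ite_eq_neg_sub_le N hα

lemma tsum_triangleSummand_le {α : ℝ} (hα : 1 < α) (N : ℕ) :
    ∑' q, triangleSummand α N q ≤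
      convConst α ^ 2 * ∑' p : ℕ × ℕ, dZ (N + p.1) (-1 - p.2) ^ (-(2 * α)) := by
  have hu := six_le_convConst hα
  have hS : 0 ≤ ∑' p : ℕ × ℕ, dZ (N + p.1) (-1 - p.2) ^ (-(2 * α)) :=
    tsum_nonneg fun _ => dZ_rpow_nonneg _ _ _
  refine tsum_le_of_tsum_ofReal_le (triangleSummand_nonneg α N) (by positivity) ?_
  calc ∑' q, ENNReal.ofReal (triangleSummand α N q)
      ≤ ENNReal.ofReal (6 * convConst α) *
          ∑' (i : ℕ) (j' : ℕ), powDecay (2 * α) (N + i) (-1 - j') :=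
        tsum_ofReal_triangleSummand_le hα N
    _ = ENNReal.ofReal (6 * convConst α * ∑' p : ℕ × ℕ, dZ (N + p.1) (-1 - p.2) ^ (-(2 * α))) := by
        rw [ENNReal.ofReal_mul (p := 6 * convConst α) (by linarith), ENNReal.ofReal_tsum_of_nonneg
          (fun _ => dZ_rpow_nonneg _ _ _) (summable_dZ_rpow_corner hα N), ENNReal.tsum_prod']
        rfl
    _ ≤ _ := ENNReal.ofReal_le_ofReal (by gcongr; nlinarith)

/-- Transverse-Ising quadruple lattice sum: for `α > 1` and
`u = 2^α ∑_m d(0,m)^{-α}`, the sum over `k ≥ n`, `ℓ < n`, `k' ≥ 0`, `ℓ' < 0` and over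
the assignments `{a,b} = {k,ℓ}`, `{a',b'} = {k',ℓ'}` (with the Kronecker constraint
`b = b'`) of `d(a,b)^{-α} d(a',b)^{-α} d(a,a')^{-α}` is at most
`u² ∑_{k ≥ n, ℓ' < 0} d(k,ℓ')^{-2α}`, hence at most `C n^{2-2α}`. -/
theorem stmt_14 (α : ℝ) (hα : 1 < α) (u : ℝ)
    (hu : u = 2 ^ α * ∑' m : ℤ, dZ 0 m ^ (-α)) :
    ∃ C : ℝ, 0 < C ∧ ∀ n : ℤ, 1 ≤ n →
      (∑' q : (ℕ × ℕ) × (ℕ × ℕ) × Bool × Bool,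
          (let k : ℤ := n + q.1.1
           let l : ℤ := n - 1 - q.1.2
           let k' : ℤ := q.2.1.1
           let l' : ℤ := -1 - q.2.1.2
           let a : ℤ := if q.2.2.1 then k else l
           let b : ℤ := if q.2.2.1 then l else k
           let a' : ℤ := if q.2.2.2 then k' else l'
           let b' : ℤ := if q.2.2.2 then l' else k'
           if b = b' then dZ a b ^ (-α) * dZ a' b ^ (-α) * dZ a a' ^ (-α) else 0)
        ≤ u ^ 2 * ∑' p : ℕ × ℕ, dZ (n + p.1) (-1 - p.2) ^ (-(2 * α))) ∧
      u ^ 2 * (∑' p : ℕ × ℕ, dZ (n + p.1) (-1 - p.2) ^ (-(2 * α)))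
        ≤ C * (n : ℝ) ^ (2 - 2 * α) := by
  have hu6 : 6 ≤ u := hu ▸ six_le_convConst hα
  have hα1 : 0 < α - 1 := by linarith
  refine ⟨u ^ 2 / (α - 1) ^ 2, by positivity, fun n hn => ?_⟩
  lift n to ℕ using by omega
  refine ⟨hu ▸ tsum_triangleSummand_le hα n, ?_⟩
  calc u ^ 2 * ∑' p : ℕ × ℕ, dZ (n + p.1) (-1 - p.2) ^ (-(2 * α))
      ≤ u ^ 2 * ((n : ℝ) ^ (2 - 2 * α) / (α - 1) ^ 2) := by
        gcongr; exact tsum_dZ_rpow_corner_le hα (by omega)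
    _ = u ^ 2 / (α - 1) ^ 2 * ((n : ℤ) : ℝ) ^ (2 - 2 * α) := by
        rw [Int.cast_natCast]; ring
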